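/- Let N ≥ k−1 be an integer, G a finite abelian group with |G| ≥ N^{k−1+c} for some c > 0, and let A = (a₁,...,a_N) be i.i.d. uniform in G. Let X₁ = Σ_{i∈I} a_i for a uniformly random (k−1)-subset I of [N], and let X₂ be uniform on the set Z of all (k−1)-wise sums of coordinates of A. Then the statistical distance between the joint distributions (A, X₁) and (A, X₂) is O(1/√(N^c)); concretely it is at most 1/((k−1)! N^{c/2}) + N^{−c/2}. -/

import Mathlib

/-!
For fixed `a`, `X₁` is the push-forward of the uniform measure on `(k-1)`-subsets under
`I ↦ ∑ i ∈ I, a i` and `X₂` is uniform on its image `Z`, so their distance is at most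
`(C - |Z|) / C` with `C = N.choose (k - 1)`. The deficiency `C - |Z|` is at most the number of
ordered pairs `I ≠ J` with `∑ i ∈ I, a i = ∑ i ∈ J, a i`, and each such equation holds for at most
a `1 / |G|` fraction of the tuples `a`, because it determines `a i` for any `i ∈ I \ J` from the
other coordinates. Averaging over `a` bounds the distance by
`C / |G| ≤ N ^ (k - 1) / ((k - 1)! |G|) ≤ 1 / ((k - 1)! N ^ c)`, with no need for Markov's inequality.
-/

/-- The set of `(k-1)`-wise sums of the coordinates of `a`. -/
def sumsSet (k N : ℕ) {G : Type} [AddCommMonoid G] [DecidableEq G]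
    (a : Fin N → G) : Finset G :=
  (Finset.powersetCard (k - 1) (Finset.univ : Finset (Fin N))).image (fun I => ∑ i ∈ I, a i)

/-- Probability that the sum over a uniformly random `(k-1)`-subset equals `g`,
    for a fixed tuple `a`. -/
noncomputable def pSum (k N : ℕ) {G : Type} [AddCommMonoid G] [DecidableEq G]
    (a : Fin N → G) (g : G) : ℝ :=
  (((Finset.powersetCard (k - 1) (Finset.univ : Finset (Fin N))).filter
      (fun I => ∑ i ∈ I, a i = g)).card : ℝ) / (N.choose (k - 1) : ℝ)

/-- Probability that a uniform element of the sum set `Z` equals `g`,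
    for a fixed tuple `a`. -/
noncomputable def pUnif (k N : ℕ) {G : Type} [AddCommMonoid G] [DecidableEq G]
    (a : Fin N → G) (g : G) : ℝ :=
  if g ∈ sumsSet k N a then 1 / ((sumsSet k N a).card : ℝ) else 0

open Finset

section
variable {ι G : Type*} [Fintype ι] [DecidableEq ι] [AddCommGroup G] [Fintype G] [DecidableEq G]

lemma card_filter_sum_eq_sum_le {I J : Finset ι} (hIJ : ¬ I ⊆ J) :
    #{a : ι → G | ∑ i ∈ I, a i = ∑ i ∈ J, a i} ≤ Fintype.card G ^ (Fintype.card ι - 1) := by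
  obtain ⟨i, hiI, hiJ⟩ := not_subset.1 hIJ
  have solve : ∀ a : ι → G, ∑ j ∈ I, a j = ∑ j ∈ J, a j →
      a i = ∑ j ∈ J, a j - ∑ j ∈ I.erase i, a j := fun a ha => by
    rw [← ha, ← add_sum_erase I a hiI, add_sub_cancel_right]
  calc _ ≤ #(univ : Finset ({j // j ≠ i} → G)) := by
        refine card_le_card_of_injOn (fun a j => a j) (fun _ _ => mem_univ _) ?_
        intro a ha b hb hab
        have agree : ∀ j ≠ i, a j = b j := fun j hj => congrFun hab ⟨j, hj⟩
        funext j
        obtain rfl | hj := eq_or_ne j i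
        · rw [solve a (mem_filter.1 ha).2, solve b (mem_filter.1 hb).2,
            sum_congr rfl fun j hj => agree j (ne_of_mem_of_not_mem hj hiJ),
            sum_congr rfl fun j hj => agree j (ne_of_mem_erase hj)]
        · exact agree j hj
    _ = Fintype.card G ^ (Fintype.card ι - 1) := by
        simp [Fintype.card_subtype_compl]

lemma sum_card_collisions_le {r : ℕ} (𝒜 : Finset (Finset ι)) (h𝒜 : (𝒜 : Set (Finset ι)).Sized r) :
    ∑ a : ι → G, #{p ∈ 𝒜.offDiag | ∑ i ∈ p.1, a i = ∑ i ∈ p.2, a i}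
      ≤ #𝒜 ^ 2 * Fintype.card G ^ (Fintype.card ι - 1) := by
  have hsol : ∀ p ∈ 𝒜.offDiag, #{a : ι → G | ∑ i ∈ p.1, a i = ∑ i ∈ p.2, a i}
      ≤ Fintype.card G ^ (Fintype.card ι - 1) := by
    rintro ⟨I, J⟩ hIJ
    obtain ⟨hI, hJ, hne⟩ := mem_offDiag.1 hIJ
    exact card_filter_sum_eq_sum_le fun hsub =>
      hne (eq_of_subset_of_card_le hsub (h𝒜 hJ ▸ h𝒜 hI ▸ le_rfl))
  calc ∑ a : ι → G, #{p ∈ 𝒜.offDiag | ∑ i ∈ p.1, a i = ∑ i ∈ p.2, a i}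
      = ∑ p ∈ 𝒜.offDiag, #{a : ι → G | ∑ i ∈ p.1, a i = ∑ i ∈ p.2, a i} := by
        simp only [card_filter]
        exact sum_comm
    _ ≤ #𝒜.offDiag * Fintype.card G ^ (Fintype.card ι - 1) := sum_le_card_nsmul _ _ _ hsol
    _ ≤ #𝒜 ^ 2 * Fintype.card G ^ (Fintype.card ι - 1) := by
        gcongr
        rw [offDiag_card, sq]
        exact Nat.sub_le _ _

end

lemma card_le_card_image_add_card_collisions {α β : Type*} [DecidableEq α] [DecidableEq β]
    (s : Finset α) (f : α → β) :
    #s ≤ #(s.image f) + #{p ∈ s.offDiag | f p.1 = f p.2} := by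
  set T := {p ∈ s.offDiag | f p.1 = f p.2}.image Prod.fst
  have hinj : Set.InjOn f ↑(s \ T) := by
    intro x hx y hy hxy
    by_contra hne
    rw [mem_coe, mem_sdiff] at hx hy
    exact hx.2 (mem_image.2 ⟨(x, y), mem_filter.2 ⟨mem_offDiag.2 ⟨hx.1, hy.1, hne⟩, hxy⟩, rfl⟩)
  calc #s ≤ #(s \ T) + #T := card_le_card_sdiff_add_card
    _ ≤ #(s.image f) + #{p ∈ s.offDiag | f p.1 = f p.2} := by
        refine add_le_add ?_ card_image_le
        rw [← card_image_of_injOn hinj]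
        exact card_le_card (image_subset_image sdiff_subset)

lemma sum_abs_fiber_sub_uniform_le {α β : Type*} [DecidableEq β] [Fintype β]
    (s : Finset α) (hs : s.Nonempty) (f : α → β) :
    ∑ b, |(#{x ∈ s | f x = b} : ℝ) / #s - (if b ∈ s.image f then 1 / (#(s.image f) : ℝ) else 0)|
      ≤ 2 * ((#s - #(s.image f)) / #s) := by
  set Z := s.image f
  have hn : (0 : ℝ) < #s := by exact_mod_cast hs.card_pos
  have hm : (0 : ℝ) < #Z := by exact_mod_cast (hs.image f).card_pos
  have hmn : (#Z : ℝ) ≤ #s := by exact_mod_cast card_image_le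
  have hfiber : ∀ b ∈ Z, (1 : ℝ) ≤ #{x ∈ s | f x = b} := fun b hb => by
    obtain ⟨x, hx, hfx⟩ := mem_image.1 hb
    exact_mod_cast card_pos.2 ⟨x, mem_filter.2 ⟨hx, hfx⟩⟩
  have hsum : ∑ b ∈ Z, (#{x ∈ s | f x = b} : ℝ) = #s := by
    exact_mod_cast (card_eq_sum_card_image f s).symm
  rw [← sum_subset (subset_univ Z) fun b _ hb => by
    rw [if_neg hb, filter_false_of_mem fun x hx hfx => hb (mem_image.2 ⟨x, hx, hfx⟩)]
    simp]
  calc ∑ b ∈ Z, |(#{x ∈ s | f x = b} : ℝ) / #s - (if b ∈ Z then 1 / (#Z : ℝ) else 0)|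
      ≤ ∑ b ∈ Z, (((#{x ∈ s | f x = b} : ℝ) - 1) / #s + (1 / #Z - 1 / #s)) := by
        refine sum_le_sum fun b hb => ?_
        -- triangle inequality through `1 / #s`
        have h1 := hfiber b hb
        have h2 : 1 / (#s : ℝ) ≤ 1 / #Z := one_div_le_one_div_of_le hm hmn
        rw [if_pos hb, abs_le, sub_div]
        constructor <;> linarith [div_le_div_of_nonneg_right h1 hn.le]
    _ = 2 * ((#s - #Z) / #s) := by
        rw [sum_add_distrib, ← sum_div, sum_sub_distrib, hsum]
        simp only [sum_const, nsmul_eq_mul, mul_one]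
        field_simp
        ring

lemma sum_abs_pSum_sub_pUnif_le (k N : ℕ) {G : Type} [AddCommMonoid G] [Fintype G] [DecidableEq G]
    (hN : k - 1 ≤ N) (a : Fin N → G) :
    ∑ g, |pSum k N a g - pUnif k N a g|
      ≤ 2 * ((N.choose (k - 1) - #(sumsSet k N a)) / N.choose (k - 1)) := by
  have hne : (powersetCard (k - 1) (univ : Finset (Fin N))).Nonempty :=
    powersetCard_nonempty.2 (by simpa using hN)
  simpa [pSum, pUnif, sumsSet, card_powersetCard] using
    sum_abs_fiber_sub_uniform_le _ hne fun I => ∑ i ∈ I, a i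

lemma sum_choose_sub_card_sumsSet_le (k N : ℕ) {G : Type} [AddCommGroup G] [Fintype G]
    [DecidableEq G] :
    ∑ a : Fin N → G, ((N.choose (k - 1) : ℝ) - #(sumsSet k N a))
      ≤ (N.choose (k - 1) : ℝ) ^ 2 * Fintype.card G ^ (N - 1) := by
  set 𝒜 := powersetCard (k - 1) (univ : Finset (Fin N))
  have h𝒜 : #𝒜 = N.choose (k - 1) := by simp [𝒜, card_powersetCard]
  have hdef : ∀ a : Fin N → G, (N.choose (k - 1) : ℝ) - #(sumsSet k N a)
      ≤ #{p ∈ 𝒜.offDiag | ∑ i ∈ p.1, a i = ∑ i ∈ p.2, a i} := fun a => by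
    rw [← h𝒜, sub_le_iff_le_add']
    exact_mod_cast card_le_card_image_add_card_collisions 𝒜 fun I => ∑ i ∈ I, a i
  calc _ ≤ ∑ a : Fin N → G, (#{p ∈ 𝒜.offDiag | ∑ i ∈ p.1, a i = ∑ i ∈ p.2, a i} : ℝ) :=
        sum_le_sum fun a _ => hdef a
    _ ≤ _ := by
        have := sum_card_collisions_le (G := G) 𝒜 (Set.sized_powersetCard _ _)
        rw [h𝒜, Fintype.card_fin] at this
        exact_mod_cast this

lemma statDist_le_choose_div_card (k N : ℕ) (hN : k - 1 ≤ N) (hN₀ : 0 < N)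
    (G : Type) [AddCommGroup G] [Fintype G] [DecidableEq G] :
    (1 / 2) * ∑ a : Fin N → G, ∑ g : G,
        |pSum k N a g / (Fintype.card G : ℝ) ^ N - pUnif k N a g / (Fintype.card G : ℝ) ^ N|
      ≤ (N.choose (k - 1) : ℝ) / Fintype.card G := by
  have hC : (0 : ℝ) < N.choose (k - 1) := by exact_mod_cast Nat.choose_pos hN
  have hq : (0 : ℝ) < Fintype.card G := by exact_mod_cast Fintype.card_pos
  set C : ℝ := (N.choose (k - 1) : ℝ)
  set q : ℝ := (Fintype.card G : ℝ)
  have hqN : q ^ N = q ^ (N - 1) * q := by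
    rw [← pow_succ, Nat.sub_add_cancel hN₀]
  calc (1 / 2) * ∑ a : Fin N → G, ∑ g : G, |pSum k N a g / q ^ N - pUnif k N a g / q ^ N|
      = (1 / 2) * (∑ a : Fin N → G, ∑ g : G, |pSum k N a g - pUnif k N a g|) / q ^ N := by
        simp_rw [← sub_div, abs_div, abs_of_pos (pow_pos hq N), ← sum_div, mul_div_assoc]
    _ ≤ (1 / 2) * (∑ a : Fin N → G, 2 * ((C - #(sumsSet k N a)) / C)) / q ^ N := by
        gcongr with a
        exact sum_abs_pSum_sub_pUnif_le k N hN a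
    _ = (∑ a : Fin N → G, (C - #(sumsSet k N a))) / (C * q ^ N) := by
        rw [← mul_sum, ← sum_div]
        field_simp
    _ ≤ C ^ 2 * q ^ (N - 1) / (C * q ^ N) := by
        gcongr
        exact sum_choose_sub_card_sumsSet_le k N
    _ = C / q := by
        rw [hqN]
        field_simp

lemma choose_div_le_inv_factorial_mul_rpow (k N : ℕ) (hk : 1 ≤ k) (hN : 0 < N) {c q : ℝ}
    (hq : (N : ℝ) ^ ((k : ℝ) - 1 + c) ≤ q) :
    (N.choose (k - 1) : ℝ) / q ≤ 1 / ((k - 1).factorial * (N : ℝ) ^ c) := by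
  have hNpos : (0 : ℝ) < N := by exact_mod_cast hN
  have hpow : (N : ℝ) ^ (k - 1) * (N : ℝ) ^ c ≤ q := by
    rwa [← Real.rpow_natCast, ← Real.rpow_add hNpos, Nat.cast_sub hk, Nat.cast_one]
  have hqpos : 0 < q := lt_of_lt_of_le (by positivity) hpow
  rw [div_le_div_iff₀ hqpos (by positivity), one_mul]
  calc (N.choose (k - 1) : ℝ) * ((k - 1).factorial * (N : ℝ) ^ c)
      ≤ (N : ℝ) ^ (k - 1) / (k - 1).factorial * ((k - 1).factorial * (N : ℝ) ^ c) := by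
        gcongr
        exact Nat.choose_le_pow_div _ _
    _ = (N : ℝ) ^ (k - 1) * (N : ℝ) ^ c := by
        field_simp
    _ ≤ q := hpow

theorem stmt_4 (k N : ℕ) (hk : 3 ≤ k) (hN : k - 1 ≤ N) (c : ℝ) (hc : 0 < c)
    (G : Type) [AddCommGroup G] [Fintype G] [DecidableEq G]
    (hG : (N : ℝ) ^ ((k : ℝ) - 1 + c) ≤ (Fintype.card G : ℝ)) :
    (1 / 2) * ∑ a : Fin N → G, ∑ g : G,
        |pSum k N a g / (Fintype.card G : ℝ) ^ N -
          pUnif k N a g / (Fintype.card G : ℝ) ^ N| ≤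
      1 / (((k - 1).factorial : ℝ) * (N : ℝ) ^ (c / 2)) + (N : ℝ) ^ (-(c / 2)) := by
  have hN1 : (1 : ℝ) ≤ N := by exact_mod_cast (by omega : 1 ≤ N)
  calc _ ≤ (N.choose (k - 1) : ℝ) / Fintype.card G := statDist_le_choose_div_card k N hN (by omega) G
    _ ≤ 1 / ((k - 1).factorial * (N : ℝ) ^ c) :=
        choose_div_le_inv_factorial_mul_rpow k N (by omega) (by omega) hG
    _ ≤ 1 / ((k - 1).factorial * (N : ℝ) ^ (c / 2)) := by
        gcongr
        linarith
    _ ≤ _ := le_add_of_nonneg_right (Real.rpow_nonneg (by positivity) _)
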